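/- Let Ω be an open subset of ℝ^d, let θ : ℝ^d → ℝ be continuous with compact support contained in Ω, and let φ : ℝ^d → ℝ be continuous and ℤ^d-periodic (i.e. φ(x+k)=φ(x) for all k ∈ ℤ^d). Then, as ε → 0⁺, ∫_Ω θ(x) φ(x/ε) dx converges to (∫_{[0,1]^d} φ(z) dz) · (∫_Ω θ(x) dx). -/

import Mathlib

/-!
Averaging over translates of the cell. The substitution `x ↦ x + ε y` gives
`∫ θ(x) φ(x/ε) dx = ∫ θ(x + ε y) φ(x/ε + y) dx` for every `y`, and replacing `θ(x + ε y)` by `θ(x)`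
costs at most `‖φ‖∞ ∫ |θ(x + ε y) - θ(x)| dx`, which is small uniformly in `y ∈ [0,1]^d` by uniform
continuity of `θ`. Averaging the main term over `y` in the unit cube and applying Fubini gives
`∫ θ(x) (∫_{[0,1]^d} φ(x/ε + y) dy) dx`, and the inner integral is `∫_{[0,1]^d} φ` for every `x`
because a translate of the unit cube is again a fundamental domain of `ℤ^d`.
-/

open MeasureTheory Filter Topology

/-- The unit cube `[0,1]^d` in `ℝ^d`, representing the torus `T^d`. -/
def cube (d : ℕ) : Set (Fin d → ℝ) := Set.Icc 0 1

/-- A function on `ℝ^d` is `ℤ^d`-periodic. -/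
def ZPeriodic {d : ℕ} (φ : (Fin d → ℝ) → ℝ) : Prop :=
  ∀ (x : Fin d → ℝ) (k : Fin d → ℤ), φ (x + fun i => (k i : ℝ)) = φ x

open Set Pointwise

theorem norm_comp_add_sub_le_mul_indicator {E F : Type*} [TopologicalSpace E] [Add E]
    [NormedAddCommGroup F] {f : E → F} {v : E} {r : ℝ}
    (hr : ∀ x, ‖f (x + v) - f x‖ ≤ r) (x : E) :
    ‖f (x + v) - f x‖
      ≤ r * ((tsupport f).indicator 1 x + (tsupport f).indicator 1 (x + v)) := by
  have hr0 : 0 ≤ r := (norm_nonneg _).trans (hr x)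
  by_cases hx : x ∈ tsupport f ∨ x + v ∈ tsupport f
  · have hsum : 1 ≤ (tsupport f).indicator (1 : E → ℝ) x + (tsupport f).indicator 1 (x + v) := by
      rcases hx with hx | hx <;> simp [indicator_of_mem hx, indicator_nonneg]
    nlinarith [hr x]
  · push Not at hx
    rw [image_eq_zero_of_notMem_tsupport hx.1, image_eq_zero_of_notMem_tsupport hx.2, sub_zero,
      norm_zero]
    exact mul_nonneg hr0 (add_nonneg (indicator_nonneg (fun _ _ => zero_le_one) _)
      (indicator_nonneg (fun _ _ => zero_le_one) _))

section Translation

variable {E F : Type*} [NormedAddCommGroup E] [MeasurableSpace E] [BorelSpace E]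
  [NormedAddCommGroup F] (μ : Measure E) [μ.IsAddRightInvariant] [IsFiniteMeasureOnCompacts μ]

theorem HasCompactSupport.tendsto_integral_norm_comp_add_sub {f : E → F} (hf : Continuous f)
    (hfs : HasCompactSupport f) :
    Tendsto (fun v => ∫ x, ‖f (x + v) - f x‖ ∂μ) (𝓝 0) (𝓝 0) := by
  set K := tsupport f
  have hKm : MeasurableSet K := (isClosed_tsupport f).measurableSet
  have hK1 : Integrable (K.indicator (1 : E → ℝ)) μ :=
    (integrable_indicator_iff hKm).mpr (integrableOn_const hfs.measure_lt_top.ne)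
  have hc : 0 < 2 * μ.real K + 1 := by positivity
  rw [Metric.tendsto_nhds]
  intro η hη
  obtain ⟨δ, hδ, hδf⟩ := Metric.uniformContinuous_iff.mp
    (hfs.uniformContinuous_of_continuous hf) _ (div_pos hη hc)
  filter_upwards [Metric.ball_mem_nhds 0 hδ] with v hv
  have hpt : ∀ x, ‖f (x + v) - f x‖ ≤ η / (2 * μ.real K + 1) := fun x => by
    rw [← dist_eq_norm]
    exact (hδf (by simpa [dist_eq_norm] using hv)).le
  rw [dist_zero_right, Real.norm_of_nonneg (integral_nonneg fun _ => norm_nonneg _)]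
  calc ∫ x, ‖f (x + v) - f x‖ ∂μ
      ≤ ∫ x, η / (2 * μ.real K + 1) * (K.indicator 1 x + K.indicator 1 (x + v)) ∂μ :=
        integral_mono_of_nonneg (Eventually.of_forall fun _ => norm_nonneg _)
          ((hK1.add (hK1.comp_add_right v)).const_mul _)
          (Eventually.of_forall (norm_comp_add_sub_le_mul_indicator hpt))
    _ = η / (2 * μ.real K + 1) * (2 * μ.real K) := by
        rw [integral_const_mul, integral_add hK1 (hK1.comp_add_right v),
          integral_add_right_eq_self (fun x => K.indicator (1 : E → ℝ) x),
          integral_indicator_one hKm]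
        ring
    _ < η := by
        rw [div_mul_eq_mul_div, div_lt_iff₀ hc]
        nlinarith

theorem HasCompactSupport.eventually_forall_integral_norm_comp_add_smul_sub_lt [NormedSpace ℝ E]
    {f : E → F} (hf : Continuous f) (hfs : HasCompactSupport f) {s : Set E}
    (hs : Bornology.IsBounded s) {η : ℝ} (hη : 0 < η) :
    ∀ᶠ ε in 𝓝 (0 : ℝ), ∀ y ∈ s, ∫ x, ‖f (x + ε • y) - f x‖ ∂μ < η := by
  obtain ⟨R, hR⟩ := hs.exists_norm_le
  obtain ⟨r, hr, hsmall⟩ := Metric.eventually_nhds_iff.mp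
    ((Metric.tendsto_nhds.mp (hfs.tendsto_integral_norm_comp_add_sub μ hf)) η hη)
  have hR1 : 0 < |R| + 1 := by positivity
  filter_upwards [Metric.ball_mem_nhds 0 (div_pos hr hR1)] with ε hε y hy
  have hεy : dist (ε • y) 0 < r := by
    rw [dist_zero_right, norm_smul]
    rw [Metric.mem_ball, dist_zero_right, lt_div_iff₀ hR1] at hε
    calc ‖ε‖ * ‖y‖ ≤ ‖ε‖ * (|R| + 1) := by
          gcongr; exact (hR y hy).trans ((le_abs_self R).trans (le_add_of_nonneg_right zero_le_one))
      _ < r := hε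
  have hlt := hsmall hεy
  rw [Real.dist_eq, sub_zero] at hlt
  exact (le_abs_self _).trans_lt hlt

end Translation

section Shift

variable {E : Type*} [NormedAddCommGroup E] [NormedSpace ℝ E] [MeasurableSpace E] [BorelSpace E]
  {μ : Measure E}

theorem integral_mul_comp_inv_smul_eq [μ.IsAddRightInvariant] (θ φ : E → ℝ) {ε : ℝ} (hε : ε ≠ 0)
    (y : E) : ∫ x, θ x * φ (ε⁻¹ • x) ∂μ = ∫ x, θ (x + ε • y) * φ (ε⁻¹ • x + y) ∂μ := by
  rw [← integral_add_right_eq_self (fun x => θ x * φ (ε⁻¹ • x)) (ε • y)]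
  simp only [smul_add, inv_smul_smul₀ hε]

theorem norm_integral_mul_comp_inv_smul_sub_le [μ.IsAddRightInvariant] {θ φ : E → ℝ}
    (hθ : Integrable θ μ) (hφ : Continuous φ) {M : ℝ} (hM : ∀ z, ‖φ z‖ ≤ M) {ε : ℝ} (hε : ε ≠ 0)
    (y : E) :
    ‖∫ x, θ x * φ (ε⁻¹ • x) ∂μ - ∫ x, θ x * φ (ε⁻¹ • x + y) ∂μ‖
      ≤ M * ∫ x, ‖θ (x + ε • y) - θ x‖ ∂μ := by
  have hφy : AEStronglyMeasurable (fun x => φ (ε⁻¹ • x + y)) μ :=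
    (hφ.comp ((continuous_const_smul _).add continuous_const)).aestronglyMeasurable
  have hθy : Integrable (fun x => θ (x + ε • y)) μ := hθ.comp_add_right (ε • y)
  rw [integral_mul_comp_inv_smul_eq θ φ hε y, ← integral_sub
    (hθy.mul_bdd hφy (Eventually.of_forall fun _ => hM _))
    (hθ.mul_bdd hφy (Eventually.of_forall fun _ => hM _)), ← integral_const_mul]
  refine norm_integral_le_of_norm_le ((hθy.sub hθ).norm.const_mul M)
    (Eventually.of_forall fun x => ?_)
  rw [← sub_mul, norm_mul, mul_comm]
  exact mul_le_mul_of_nonneg_right (hM _) (norm_nonneg _)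

theorem integrable_prod_mul_comp_inv_smul_add [SecondCountableTopology E] [SFinite μ]
    {θ φ : E → ℝ} (hθ : Integrable θ μ) (hφ : Continuous φ) {M : ℝ} (hM : ∀ z, ‖φ z‖ ≤ M)
    (ν : Measure E) [IsFiniteMeasure ν] (ε : ℝ) :
    Integrable (fun p : E × E => θ p.2 * φ (ε⁻¹ • p.2 + p.1)) (ν.prod μ) := by
  have hφm : AEStronglyMeasurable (fun p : E × E => φ (ε⁻¹ • p.2 + p.1)) (ν.prod μ) :=
    (hφ.comp ((continuous_snd.const_smul _).add continuous_fst)).aestronglyMeasurable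
  simpa [mul_comm] using
    ((integrable_const (1 : ℝ)).mul_prod hθ).bdd_mul hφm (Eventually.of_forall fun _ => hM _)

end Shift

theorem isCompact_cube (d : ℕ) : IsCompact (cube d) := isCompact_Icc

instance (d : ℕ) : IsFiniteMeasure (volume.restrict (cube d)) :=
  isFiniteMeasure_restrict.mpr (isCompact_cube d).measure_lt_top.ne

theorem measureReal_cube (d : ℕ) : volume.real (cube d) = 1 := by
  simp [cube, measureReal_def, Real.volume_Icc_pi_toReal]

namespace ZPeriodic

variable {d : ℕ} {φ : (Fin d → ℝ) → ℝ}

theorem exists_norm_le (hφc : Continuous φ) (hφ : ZPeriodic φ) : ∃ M, ∀ x, ‖φ x‖ ≤ M := by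
  obtain ⟨M, hM⟩ := (isCompact_cube d).exists_bound_of_continuousOn hφc.continuousOn
  refine ⟨M, fun x => ?_⟩
  have hfract : (x + fun i => ((-⌊x i⌋ : ℤ) : ℝ)) ∈ cube d := by
    constructor <;> intro i <;> simp [← sub_eq_add_neg, Int.fract_nonneg, (Int.fract_lt_one _).le]
  rw [← hφ x fun i => -⌊x i⌋]
  exact hM _ hfract

theorem setIntegral_cube_add (hφ : ZPeriodic φ) (a : Fin d → ℝ) :
    ∫ y in cube d, φ (a + y) = ∫ y in cube d, φ y := by
  set b := Pi.basisFun ℝ (Fin d)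
  have : Countable (Submodule.span ℤ (range b)).toAddSubgroup :=
    inferInstanceAs (Countable (Submodule.span ℤ (range b)))
  have hD := ZSpan.isAddFundamentalDomain' b volume
  have hcube : cube d =ᵐ[volume] ZSpan.fundamentalDomain b := by
    rw [ZSpan.fundamentalDomain_pi_basisFun]
    exact Measure.univ_pi_Ico_ae_eq_Icc.symm
  have hinv : ∀ (g : (Submodule.span ℤ (range b)).toAddSubgroup) x, φ (g +ᵥ x) = φ x := by
    intro g x
    choose n hn using (b.mem_span_iff_repr_mem ℤ g).mp g.2
    have hg : (g : Fin d → ℝ) = fun i => (n i : ℝ) :=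
      funext fun i => by simpa [b] using (hn i).symm
    rw [Submodule.vadd_def, vadd_eq_add, add_comm, hg, hφ]
  calc ∫ y in cube d, φ (a + y) = ∫ y in ZSpan.fundamentalDomain b, φ (a + y) :=
        setIntegral_congr_set hcube
    _ = ∫ y in a +ᵥ ZSpan.fundamentalDomain b, φ y :=
        ((measurePreserving_add_left volume a).setIntegral_image_emb
          (measurableEmbedding_addLeft a) _ _).symm
    _ = ∫ y in ZSpan.fundamentalDomain b, φ y := (hD.vadd_of_comm a).setIntegral_eq hD hinv
    _ = ∫ y in cube d, φ y := setIntegral_congr_set hcube.symm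

theorem setIntegral_cube_integral_mul_comp_inv_smul_add (hφc : Continuous φ) (hφ : ZPeriodic φ)
    {θ : (Fin d → ℝ) → ℝ} (hθ : Integrable θ) (ε : ℝ) :
    ∫ y in cube d, ∫ x, θ x * φ (ε⁻¹ • x + y) = (∫ z in cube d, φ z) * ∫ x, θ x := by
  obtain ⟨M, hM⟩ := hφ.exists_norm_le hφc
  rw [integral_integral_swap (integrable_prod_mul_comp_inv_smul_add hθ hφc hM _ ε)]
  simp_rw [integral_const_mul, hφ.setIntegral_cube_add, integral_mul_const, mul_comm]

theorem tendsto_integral_mul_comp_inv_smul (hφc : Continuous φ) (hφ : ZPeriodic φ)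
    {θ : (Fin d → ℝ) → ℝ} (hθc : Continuous θ) (hθs : HasCompactSupport θ) :
    Tendsto (fun ε : ℝ => ∫ x, θ x * φ (ε⁻¹ • x)) (𝓝[≠] 0)
      (𝓝 ((∫ z in cube d, φ z) * ∫ x, θ x)) := by
  obtain ⟨M, hM⟩ := hφ.exists_norm_le hφc
  have hM0 : 0 ≤ M := (norm_nonneg _).trans (hM 0)
  have hM1 : 0 < M + 1 := by linarith
  have hθ : Integrable θ := hθc.integrable_of_hasCompactSupport hθs
  rw [Metric.tendsto_nhds]
  intro η hη
  filter_upwards [nhdsWithin_le_nhds (hθs.eventually_forall_integral_norm_comp_add_smul_sub_lt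
      volume hθc (isCompact_cube d).isBounded (div_pos hη hM1)), self_mem_nhdsWithin]
    with ε hsmall (hε : ε ≠ 0)
  have hg : IntegrableOn (fun y => ∫ x, θ x * φ (ε⁻¹ • x + y)) (cube d) :=
    (integrable_prod_mul_comp_inv_smul_add hθ hφc hM _ ε).integral_prod_left
  rw [dist_eq_norm, ← setIntegral_cube_integral_mul_comp_inv_smul_add hφc hφ hθ ε]
  calc ‖(∫ x, θ x * φ (ε⁻¹ • x)) - ∫ y in cube d, ∫ x, θ x * φ (ε⁻¹ • x + y)‖
      = ‖∫ y in cube d, ((∫ x, θ x * φ (ε⁻¹ • x)) - ∫ x, θ x * φ (ε⁻¹ • x + y))‖ := by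
        rw [integral_sub (integrable_const _) hg, setIntegral_const, measureReal_cube, one_smul]
    _ ≤ M * (η / (M + 1)) * volume.real (cube d) :=
        norm_setIntegral_le_of_norm_le_const (isCompact_cube d).measure_lt_top fun y hy =>
          (norm_integral_mul_comp_inv_smul_sub_le hθ hφc hM hε y).trans
            (mul_le_mul_of_nonneg_left (hsmall y hy).le hM0)
    _ < η := by
        rw [measureReal_cube, mul_one, mul_div_assoc', div_lt_iff₀ hM1]
        linarith

end ZPeriodic

theorem statement0_general (d : ℕ) (Ω : Set (Fin d → ℝ))
    (θ φ : (Fin d → ℝ) → ℝ)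
    (hθc : Continuous θ) (hθs : HasCompactSupport θ) (hθΩ : tsupport θ ⊆ Ω)
    (hφc : Continuous φ) (hφp : ZPeriodic φ) :
    Tendsto (fun ε : ℝ => ∫ x in Ω, θ x * φ (ε⁻¹ • x)) (𝓝[>] (0:ℝ))
      (𝓝 ((∫ z in cube d, φ z) * ∫ x in Ω, θ x)) := by
  have hθ_zero : ∀ x ∉ Ω, θ x = 0 := fun x hx =>
    image_eq_zero_of_notMem_tsupport fun h => hx (hθΩ h)
  have hIΩ : ∀ ε : ℝ, ∫ x, θ x * φ (ε⁻¹ • x) = ∫ x in Ω, θ x * φ (ε⁻¹ • x) := fun ε =>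
    (setIntegral_eq_integral_of_forall_compl_eq_zero fun x hx => by rw [hθ_zero x hx, zero_mul]).symm
  rw [setIntegral_eq_integral_of_forall_compl_eq_zero hθ_zero]
  exact ((hφp.tendsto_integral_mul_comp_inv_smul hφc hθc hθs).mono_left
    (nhdsWithin_mono _ fun _ => ne_of_gt)).congr hIΩ

/-- for `θ` continuous with compact support in the open set `Ω` and
`φ` continuous and `ℤ^d`-periodic, `∫_Ω θ(x) φ(x/ε) dx → (∫_{[0,1]^d} φ) (∫_Ω θ)`
as `ε → 0⁺`. -/
theorem statement0 (d : ℕ) (Ω : Set (Fin d → ℝ)) (hΩ : IsOpen Ω)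
    (θ φ : (Fin d → ℝ) → ℝ)
    (hθc : Continuous θ) (hθs : HasCompactSupport θ) (hθΩ : tsupport θ ⊆ Ω)
    (hφc : Continuous φ) (hφp : ZPeriodic φ) :
    Tendsto (fun ε : ℝ => ∫ x in Ω, θ x * φ (ε⁻¹ • x)) (𝓝[>] (0:ℝ))
      (𝓝 ((∫ z in cube d, φ z) * ∫ x in Ω, θ x)) :=
  statement0_general d Ω θ φ hθc hθs hθΩ hφc hφp
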